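/- If a homogeneous ideal I ⊆ S = k[x_0,...,x_n] is r-regular, then its saturation degree is at most r, i.e., I agrees with its saturation I^sat in all degrees ≥ r. -/

import Mathlib

open MvPolynomial
attribute [local instance] MvPolynomial.gradedAlgebra

/-- The polynomial ring `S = k[x_0, …, x_n]`. -/
noncomputable abbrev MvP (k : Type*) [Field k] (n : ℕ) : Type _ := MvPolynomial (Fin (n+1)) k

/-- An ideal generated by linear forms. -/
def IsLinearIdeal {k : Type*} [Field k] {n : ℕ} (I : Ideal (MvP k n)) : Prop :=
  ∃ T : Set (MvP k n), T ⊆ (homogeneousSubmodule (Fin (n+1)) k 1 : Submodule k (MvP k n)) ∧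
    I = Ideal.span T

/-- `I` is `r`-regular (Castelnuovo–Mumford): there is a graded free resolution
`⋯ → ⊕_α S(-e_{α,i}) → ⋯ → ⊕_α S(-e_{α,0}) → I → 0` with all `e_{α,i} ≤ r + i`.
The `i`-th free module is `Fin (ρ i) → S` with generator degrees `e i`; gradedness of the
maps is expressed by homogeneity of the matrix entries (images of the standard basis). -/
def IdealIsRegular {k : Type*} [Field k] {n : ℕ} (I : Ideal (MvP k n)) (r : ℤ) : Prop :=
  ∃ (ρ : ℕ → ℕ) (e : ∀ i, Fin (ρ i) → ℕ)
    (δ : ∀ i, (Fin (ρ (i+1)) → MvP k n) →ₗ[MvP k n] (Fin (ρ i) → MvP k n))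
    (ε : (Fin (ρ 0) → MvP k n) →ₗ[MvP k n] MvP k n),
    LinearMap.range ε = I ∧
    LinearMap.ker ε = LinearMap.range (δ 0) ∧
    (∀ i, LinearMap.ker (δ i) = LinearMap.range (δ (i+1))) ∧
    (∀ β, ε (Pi.single β 1) ∈ homogeneousSubmodule (Fin (n+1)) k (e 0 β)) ∧
    (∀ i (β : Fin (ρ (i+1))) (α : Fin (ρ i)), δ i (Pi.single β 1) α = 0 ∨
      (e i α ≤ e (i+1) β ∧
        δ i (Pi.single β 1) α ∈ homogeneousSubmodule (Fin (n+1)) k (e (i+1) β - e i α))) ∧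
    (∀ i (β : Fin (ρ i)), (e i β : ℤ) ≤ r + i)

/-- The irrelevant maximal ideal `m = (x_0, …, x_n)`. -/
noncomputable def irrIdeal (k : Type*) [Field k] (n : ℕ) : Ideal (MvP k n) :=
  Ideal.span (Set.range X)

/-- The saturation `I^sat = {s : s·m^t ⊆ I for some t}` of `I`. -/
noncomputable def satIdeal {k : Type*} [Field k] {n : ℕ} (I : Ideal (MvP k n)) :
    Ideal (MvP k n) :=
  ⨆ t : ℕ, I.colon ((irrIdeal k n ^ t : Ideal (MvP k n)) : Set (MvP k n))

/-- `I` agrees with its saturation in all degrees `≥ r`. -/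
def SatInDegrees {k : Type*} [Field k] {n : ℕ} (I : Ideal (MvP k n)) (r : ℤ) : Prop :=
  ∀ d : ℕ, r ≤ (d : ℤ) → ∀ f ∈ homogeneousSubmodule (Fin (n+1)) k d, (f ∈ I ↔ f ∈ satIdeal I)

/-- The saturation degree of `I`: the least `r` from which `I` agrees with `I^sat`. -/
noncomputable def satDeg {k : Type*} [Field k] {n : ℕ} (I : Ideal (MvP k n)) : ℤ :=
  sInf {r : ℤ | SatInDegrees I r}

/-!
If `f` is homogeneous of degree `d ≥ r` and `x_j f ∈ I` for all `j`, then `f ∈ I`. This is a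
chase in the double complex formed by the Koszul complex of `x_0, …, x_n` and the graded free
resolution `F` of `I`: the family `(x_j f)_j` lifts to `F_0` in degree `d + 1`, and Koszul degree by
Koszul degree further up, the lift to `F_q` having degree `d + q + 1`. The generators of `F_n` have
degree `≤ r + n < d + n + 1`, so the top lift has entries of positive degree and is a Koszul
coboundary. Exactness of the Koszul complex of the variables carries this back down to `F_0`,
where it exhibits `f` as an element of `ε(F_0) = I`. Applying this to `I : m^t`, induction on `t`
gives `I^sat = I` in degrees `≥ r`.
-/

open Finset

section KoszulDifferential

variable {ι R M N : Type*} [LinearOrder ι] [CommRing R] [AddCommGroup M] [Module R M]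
  [AddCommGroup N] [Module R N]

def koszulSign (T : Finset ι) (i : ι) : ℤ := (-1) ^ #{j ∈ T | j < i}

lemma koszulSign_mul_self (T : Finset ι) (i : ι) : koszulSign T i * koszulSign T i = 1 := by
  rw [koszulSign, ← pow_add]
  exact Even.neg_one_pow ⟨_, rfl⟩

lemma koszulSign_smul_koszulSign_smul (T : Finset ι) (i : ι) (m : M) :
    koszulSign T i • koszulSign T i • m = m := by
  rw [smul_smul, koszulSign_mul_self, one_smul]

lemma koszulSign_insert_of_not_lt {T : Finset ι} {z i : ι} (h : ¬z < i) :
    koszulSign (insert z T) i = koszulSign T i := by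
  rw [koszulSign, koszulSign, filter_insert, if_neg h]

lemma koszulSign_insert_self_of_forall_lt {T : Finset ι} {z : ι} (hz : ∀ i ∈ T, i < z) :
    koszulSign (insert z T) z = (-1) ^ #T := by
  rw [koszulSign, filter_insert, if_neg (lt_irrefl z), filter_true_of_mem hz]

private lemma koszulSign_mul_erase_of_lt {T : Finset ι} {i j : ι} (hj : j ∈ T)
    (hji : j < i) :
    koszulSign T i * koszulSign (T.erase i) j = -(koszulSign T j * koszulSign (T.erase j) i) := by
  have hjmem : j ∈ {l ∈ T | l < i} := mem_filter.2 ⟨hj, hji⟩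
  have h₁ : {l ∈ T.erase i | l < j} = {l ∈ T | l < j} :=
    (filter_erase _ _ _).trans (erase_eq_of_notMem fun h => (mem_filter.1 h).2.asymm hji)
  have h₂ : #{l ∈ T.erase j | l < i} + 1 = #{l ∈ T | l < i} := by
    rw [filter_erase, card_erase_add_one hjmem]
  simp only [koszulSign, h₁, ← h₂, pow_succ]
  ring

lemma koszulSign_mul_erase_antisymm {T : Finset ι} {i j : ι} (hi : i ∈ T) (hj : j ∈ T)
    (hij : i ≠ j) :
    koszulSign T i * koszulSign (T.erase i) j = -(koszulSign T j * koszulSign (T.erase j) i) := by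
  rcases hij.lt_or_gt with h | h
  · rw [koszulSign_mul_erase_of_lt hi h, neg_neg]
  · exact koszulSign_mul_erase_of_lt hj h

variable (M) in
def koszulDiff (x : ι → R) : (Finset ι → M) →ₗ[R] (Finset ι → M) where
  toFun t T := ∑ i ∈ T, koszulSign T i • x i • t (T.erase i)
  map_add' t t' := by
    funext T
    simp only [Pi.add_apply, smul_add, sum_add_distrib]
  map_smul' r t := by
    funext T
    simp only [Pi.smul_apply, smul_sum, RingHom.id_apply]
    exact sum_congr rfl fun i _ => by rw [smul_comm (x i) r, smul_comm (koszulSign T i) r]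

variable {x : ι → R}

lemma koszulDiff_apply (t : Finset ι → M) (T : Finset ι) :
    koszulDiff M x t T = ∑ i ∈ T, koszulSign T i • x i • t (T.erase i) := rfl

lemma koszulDiff_congr {t t' : Finset ι → M} {T : Finset ι}
    (h : ∀ i ∈ T, t (T.erase i) = t' (T.erase i)) : koszulDiff M x t T = koszulDiff M x t' T :=
  sum_congr rfl fun i hi => by rw [h i hi]

lemma map_koszulDiff (L : M →ₗ[R] N) (t : Finset ι → M) (T : Finset ι) :
    L (koszulDiff M x t T) = koszulDiff N x (fun U => L (t U)) T := by
  simp only [koszulDiff_apply, map_sum, map_zsmul, map_smul]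

@[simp]
lemma koszulDiff_singleton (t : Finset ι → M) (j : ι) :
    koszulDiff M x t {j} = x j • t ∅ := by
  have : koszulSign {j} j = 1 := by simp [koszulSign, filter_singleton]
  rw [koszulDiff_apply, sum_singleton, this, one_smul, erase_singleton]

lemma koszulDiff_koszulDiff (t : Finset ι → M) (T : Finset ι) :
    koszulDiff M x (koszulDiff M x t) T = 0 := by
  have expand : ∀ i ∈ T, koszulSign T i • x i • koszulDiff M x t (T.erase i) =
      ∑ j ∈ T.erase i, (koszulSign T i * koszulSign (T.erase i) j) •
        (x i * x j) • t ((T.erase i).erase j) := fun i _ => by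
    simp only [koszulDiff_apply, smul_sum, mul_smul, smul_comm (x i) (koszulSign (T.erase i) _)]
  rw [koszulDiff_apply, sum_congr rfl expand, sum_sigma']
  refine sum_involution (fun p _ => ⟨p.2, p.1⟩) ?_ ?_ ?_ fun _ _ => rfl
  · rintro ⟨i, j⟩ hp
    obtain ⟨hi, hj⟩ := mem_sigma.1 hp
    rw [koszulSign_mul_erase_antisymm hi (mem_of_mem_erase hj) (ne_of_mem_erase hj).symm,
      mul_comm (x j), erase_right_comm, neg_smul, neg_add_cancel]
  · rintro ⟨i, j⟩ hp _ h
    exact ne_of_mem_erase (mem_sigma.1 hp).2 (congrArg Sigma.fst h)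
  · rintro ⟨i, j⟩ hp
    obtain ⟨hi, hj⟩ := mem_sigma.1 hp
    exact mem_sigma.2 ⟨mem_of_mem_erase hj, mem_erase.2 ⟨(ne_of_mem_erase hj).symm, hi⟩⟩

lemma koszulDiff_insert_of_forall_lt (t : Finset ι → M) {U : Finset ι} {z : ι}
    (hz : ∀ i ∈ U, i < z) :
    koszulDiff M x t (insert z U) =
      (-1 : ℤ) ^ #U • x z • t U + koszulDiff M x (fun W => t (insert z W)) U := by
  have hzU : z ∉ U := fun h => lt_irrefl z (hz z h)
  rw [koszulDiff_apply, sum_insert hzU, erase_insert hzU,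
    koszulSign_insert_self_of_forall_lt hz, koszulDiff_apply]
  congr 1
  refine sum_congr rfl fun i hi => ?_
  rw [koszulSign_insert_of_not_lt (hz i hi).asymm,
    erase_insert_of_ne (hz i hi).ne']

lemma koszulDiff_single_erase {V : Finset ι} {i : ι} (hi : i ∈ V) (m : M) :
    koszulDiff M x (Pi.single (V.erase i) m) V = koszulSign V i • x i • m := by
  rw [koszulDiff_apply, sum_eq_single_of_mem i hi, Pi.single_eq_same]
  intro j hj hji
  rw [Pi.single_eq_of_ne (fun h => hji ((erase_inj V hj).1 h)), smul_zero, smul_zero]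

def koszulCone (z : ι) (v : Finset ι → M) (W : Finset ι) : M :=
  if z ∈ W then v (W.erase z) else 0

lemma koszulDiff_koszulCone_insert (v : Finset ι → M) {U : Finset ι} {z : ι}
    (hz : ∀ i ∈ U, i < z) :
    koszulDiff M x (koszulCone z v) (insert z U) = koszulDiff M x v U := by
  have hzU : z ∉ U := fun h => lt_irrefl z (hz z h)
  rw [koszulDiff_insert_of_forall_lt _ hz, koszulCone, if_neg hzU, smul_zero, smul_zero,
    zero_add]
  refine koszulDiff_congr fun i _ => ?_
  have hz' : z ∉ U.erase i := fun h => hzU (mem_of_mem_erase h)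
  rw [koszulCone, if_pos (mem_insert_self z _), erase_insert hz']

lemma koszulDiff_koszulCone_of_notMem (v : Finset ι → M) {T : Finset ι} {z : ι}
    (hz : z ∉ T) :
    koszulDiff M x (koszulCone z v) T = 0 :=
  sum_eq_zero fun i _ => by
    rw [koszulCone, if_neg fun h => hz (mem_of_mem_erase h), smul_zero, smul_zero]

end KoszulDifferential

section KoszulExactness

open MvPolynomial

lemma mem_span_X_image_of_X_mul_mem {σ R : Type*} [CommSemiring R] {V : Set σ} {z : σ}
    (hz : z ∉ V) {g : MvPolynomial σ R}
    (h : X z * g ∈ Ideal.span (X '' V)) : g ∈ Ideal.span (X '' V) := by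
  rw [mem_ideal_span_X_image] at h ⊢
  intro m hm
  obtain ⟨i, hi, hmi⟩ :=
    h (Finsupp.single z 1 + m) (by rw [support_X_mul]; exact mem_map_of_mem _ hm)
  have hiz : z ≠ i := fun h => hz (h ▸ hi)
  exact ⟨i, hi, by simpa [Finsupp.single_apply, hiz] using hmi⟩

variable {σ R κ : Type*} [LinearOrder σ] [CommRing R]

local notation "kdX" => koszulDiff (κ → MvPolynomial σ R) (X : σ → MvPolynomial σ R)

lemma koszulDiff_X_apply_mem_span (t : Finset σ → κ → MvPolynomial σ R) (U : Finset σ)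
    (α : κ) :
    kdX t U α ∈ Ideal.span (X '' ↑U) := by
  rw [koszulDiff_apply, Finset.sum_apply]
  refine Ideal.sum_mem _ fun i hi => ?_
  rw [Pi.smul_apply, Pi.smul_apply, smul_eq_mul]
  exact zsmul_mem (Ideal.mul_mem_right _ _ (Ideal.subset_span (Set.mem_image_of_mem X hi))) _

lemma exists_koszulDiff_eq_of_mem_span {V : Finset σ} {g : κ → MvPolynomial σ R}
    (hg : ∀ α, g α ∈ Ideal.span (X '' ↑V)) : ∃ u, kdX u V = g := by
  choose c hc using fun α => (Submodule.mem_span_image_finset_iff_exists_fun' _).1 (hg α)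
  refine ⟨∑ i ∈ V, Pi.single (V.erase i) (koszulSign V i • fun α => c α i), ?_⟩
  rw [map_sum, Finset.sum_apply]
  funext α
  rw [← hc α, Finset.sum_apply]
  refine sum_congr rfl fun i hi => ?_
  rw [koszulDiff_single_erase hi, smul_comm (X i : MvPolynomial σ R),
    koszulSign_smul_koszulSign_smul, Pi.smul_apply, smul_eq_mul, smul_eq_mul, mul_comm]

lemma exists_koszulDiff_eq_of_koszulDiff_insert_eq_zero {V : Finset σ} {z : σ}
    (hz : ∀ i ∈ V, i < z) {t : Finset σ → κ → MvPolynomial σ R}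
    (ht : kdX t (insert z V) = 0) : ∃ u, kdX u V = t V := by
  have hzV : z ∉ (V : Set σ) := fun h => lt_irrefl z (hz z h)
  rw [koszulDiff_insert_of_forall_lt _ hz, ← eq_neg_iff_add_eq_zero] at ht
  have hXt : (X z : MvPolynomial σ R) • t V =
      (-1 : ℤ) ^ #V • -kdX (fun W => t (insert z W)) V := by
    rw [← ht, smul_smul, ← pow_add, Even.neg_one_pow ⟨_, rfl⟩, one_smul]
  refine exists_koszulDiff_eq_of_mem_span fun α => mem_span_X_image_of_X_mul_mem hzV ?_
  have hXtα := congrFun hXt α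
  simp only [Pi.smul_apply, Pi.neg_apply, smul_eq_mul] at hXtα
  rw [hXtα]
  exact zsmul_mem (neg_mem (koszulDiff_X_apply_mem_span _ _ _)) _

variable (R κ) in
def KoszulExactOn (V : Finset σ) : Prop :=
  ∀ p < #V, ∀ t : Finset σ → κ → MvPolynomial σ R,
    (∀ T ⊆ V, #T = p + 1 → kdX t T = 0) → ∃ u, ∀ T ⊆ V, #T = p → t T = kdX u T

lemma KoszulExactOn.exists_face {V : Finset σ} {z : σ} (h : KoszulExactOn R κ V)
    (hz : ∀ i ∈ V, i < z) {p : ℕ} (hp : p ≤ #V) {t : Finset σ → κ → MvPolynomial σ R}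
    (ht : ∀ T ⊆ insert z V, #T = p + 1 → kdX t T = 0) :
    ∃ u, ∀ T ⊆ V, #T = p → t T = kdX u T := by
  rcases hp.lt_or_eq with hp | rfl
  · exact h p hp t fun T hT => ht T (hT.trans (subset_insert z V))
  · have hzV : z ∉ V := fun h => lt_irrefl z (hz z h)
    obtain ⟨u, hu⟩ := exists_koszulDiff_eq_of_koszulDiff_insert_eq_zero hz
      (ht _ Subset.rfl (card_insert_of_notMem hzV))
    refine ⟨u, fun T hT hTc => ?_⟩
    rw [eq_of_subset_of_card_le hT hTc.ge, hu]

lemma KoszulExactOn.insert_of_forall_lt {V : Finset σ} {z : σ} (h : KoszulExactOn R κ V)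
    (hz : ∀ i ∈ V, i < z) : KoszulExactOn R κ (insert z V) := by
  have hzV : z ∉ V := fun h => lt_irrefl z (hz z h)
  intro p hp t ht
  rw [card_insert_of_notMem hzV, Nat.lt_succ_iff] at hp
  obtain ⟨u, hu⟩ := h.exists_face hz hp ht
  rcases p with _ | p
  · exact ⟨u, fun T _ hT => hu T (by simp [card_eq_zero.1 hT]) hT⟩
  set t' := t - kdX u
  have ht'_face : ∀ U ⊆ V, #U = p + 1 → t' U = 0 := fun U hU hUc => by
    rw [show t' U = t U - kdX u U from rfl, hu U hU hUc, sub_self]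
  -- `t'` vanishes on the faces avoiding `z`, so its faces through `z` form a cocycle on `V`
  -- one size lower; coning a primitive of it off at `z` corrects `t'`.
  have hcocycle : ∀ U ⊆ V, #U = p + 1 → kdX (fun W => t' (insert z W)) U = 0 := by
    intro U hU hUc
    have hexp := koszulDiff_insert_of_forall_lt (x := (X : σ → MvPolynomial σ R)) t'
      fun i hi => hz i (hU hi)
    rw [ht'_face U hU hUc, smul_zero, smul_zero, zero_add] at hexp
    rw [← hexp, map_sub, Pi.sub_apply, koszulDiff_koszulDiff, sub_zero,
      ht _ (insert_subset_insert z hU) (by rw [card_insert_of_notMem fun h => hzV (hU h), hUc])]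
  obtain ⟨v, hv⟩ := h p (by omega) _ hcocycle
  refine ⟨u + koszulCone z v, fun T hT hTc => ?_⟩
  rw [map_add, Pi.add_apply]
  by_cases hzT : z ∈ T
  · have hUV : T.erase z ⊆ V := fun i hi => by
      simpa [(ne_of_mem_erase hi)] using hT (mem_of_mem_erase hi)
    rw [← insert_erase hzT, koszulDiff_koszulCone_insert _ fun i hi => hz i (hUV hi),
      ← hv _ hUV (by rw [card_erase_of_mem hzT, hTc]; rfl)]
    simp [t']
  · have hTV : T ⊆ V := fun i hi => by
      simpa [show i ≠ z from fun h => hzT (h ▸ hi)] using hT hi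
    rw [koszulDiff_koszulCone_of_notMem _ hzT, add_zero, hu T hTV hTc]

theorem koszulExactOn (V : Finset σ) : KoszulExactOn R κ V := by
  induction V using Finset.induction_on_max with
  | empty => exact fun p hp => absurd hp (Nat.not_lt_zero p)
  | insert z V hz ih => exact ih.insert_of_forall_lt hz

end KoszulExactness

section GradedFamilies

variable {σ R κ κ' : Type*} [CommRing R]

lemma homogeneousComponent_mul_of_mem {c D : ℕ} (hc : c ≤ D) {a : MvPolynomial σ R}
    (ha : a ∈ homogeneousSubmodule σ R c) (h : MvPolynomial σ R) :
    homogeneousComponent D (h * a) = homogeneousComponent (D - c) h * a := by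
  rw [← decomposition.decompose'_apply, ← decomposition.decompose'_apply]
  exact DirectSum.coe_decompose_mul_of_right_mem_of_le _ ha hc

lemma mem_span_X_of_mem_homogeneousSubmodule {c : ℕ} (hc : c ≠ 0) {g : MvPolynomial σ R}
    (hg : g ∈ homogeneousSubmodule σ R c) : g ∈ Ideal.span (X '' Set.univ) := by
  rw [mem_ideal_span_X_image]
  intro m hm
  have hm0 : m ≠ 0 := by
    rintro rfl
    exact hc ((hg (mem_support_iff.1 hm)).symm.trans (map_zero _))
  obtain ⟨i, hi⟩ := Finsupp.ne_iff.1 hm0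
  exact ⟨i, Set.mem_univ i, hi⟩

lemma X_mul_mem_homogeneousSubmodule {d : ℕ} (i : σ) {f : MvPolynomial σ R}
    (hf : f ∈ homogeneousSubmodule σ R d) : X i * f ∈ homogeneousSubmodule σ R (d + 1) := by
  rw [mem_homogeneousSubmodule, Nat.add_comm d 1]
  exact (isHomogeneous_X R i).mul hf

/-- `g` is homogeneous of degree `D` in the graded free module `⊕_α S(-e α)`; the truncated
subtraction is harmless as long as all `e α ≤ D`. -/
def IsHomogeneousFamily (e : κ → ℕ) (D : ℕ) (g : κ → MvPolynomial σ R) : Prop :=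
  ∀ α, g α ∈ homogeneousSubmodule σ R (D - e α)

noncomputable def familyComponent (e : κ → ℕ) (D : ℕ) (g : κ → MvPolynomial σ R) :
    κ → MvPolynomial σ R :=
  fun α => homogeneousComponent (D - e α) (g α)

lemma isHomogeneousFamily_familyComponent (e : κ → ℕ) (D : ℕ)
    (g : κ → MvPolynomial σ R) :
    IsHomogeneousFamily e D (familyComponent e D g) :=
  fun _ => homogeneousComponent_mem _ _

lemma familyComponent_of_isHomogeneousFamily {e : κ → ℕ} {D : ℕ}
    {g : κ → MvPolynomial σ R} (hg : IsHomogeneousFamily e D g) : familyComponent e D g = g :=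
  funext fun α => by rw [familyComponent, homogeneousComponent_of_mem (hg α), if_pos rfl]

lemma linearMap_eq_sum_smul_single [Fintype κ] [DecidableEq κ] {M : Type*} [AddCommMonoid M]
    [Module (MvPolynomial σ R) M] (L : (κ → MvPolynomial σ R) →ₗ[MvPolynomial σ R] M)
    (g : κ → MvPolynomial σ R) : L g = ∑ β, g β • L (Pi.single β 1) := by
  conv_lhs => rw [← Finset.univ_sum_single g]
  rw [map_sum]
  refine sum_congr rfl fun β _ => ?_
  rw [← map_smul, ← Pi.single_smul', smul_eq_mul, mul_one]

lemma homogeneousComponent_map [Fintype κ] [DecidableEq κ] {e : κ → ℕ} {D : ℕ}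
    (L : (κ → MvPolynomial σ R) →ₗ[MvPolynomial σ R] MvPolynomial σ R)
    (hL : ∀ β, L (Pi.single β 1) ∈ homogeneousSubmodule σ R (e β)) (he : ∀ β, e β ≤ D)
    (g : κ → MvPolynomial σ R) :
    homogeneousComponent D (L g) = L (familyComponent e D g) := by
  rw [linearMap_eq_sum_smul_single L g, linearMap_eq_sum_smul_single L, map_sum]
  refine sum_congr rfl fun β _ => ?_
  rw [smul_eq_mul, smul_eq_mul, homogeneousComponent_mul_of_mem (he β) (hL β)]
  rfl

lemma familyComponent_map [Fintype κ'] [DecidableEq κ'] {e : κ → ℕ} {e' : κ' → ℕ}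
    {D : ℕ} (L : (κ' → MvPolynomial σ R) →ₗ[MvPolynomial σ R] (κ → MvPolynomial σ R))
    (hL : ∀ β α, L (Pi.single β 1) α = 0 ∨
      (e α ≤ e' β ∧ L (Pi.single β 1) α ∈ homogeneousSubmodule σ R (e' β - e α)))
    (he' : ∀ β, e' β ≤ D) (g : κ' → MvPolynomial σ R) :
    familyComponent e D (L g) = L (familyComponent e' D g) := by
  funext α
  rw [familyComponent, linearMap_eq_sum_smul_single L g, linearMap_eq_sum_smul_single L,
    Finset.sum_apply, Finset.sum_apply, map_sum]
  refine sum_congr rfl fun β _ => ?_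
  rcases hL β α with h0 | ⟨hle, hmem⟩
  · simp [h0]
  · rw [Pi.smul_apply, Pi.smul_apply, smul_eq_mul, smul_eq_mul,
      homogeneousComponent_mul_of_mem (by have := he' β; omega) hmem,
      show D - e α - (e' β - e α) = D - e' β by have := he' β; omega]
    rfl

lemma exists_isHomogeneousFamily_map_eq [Fintype κ] [DecidableEq κ] {e : κ → ℕ} {D : ℕ}
    (L : (κ → MvPolynomial σ R) →ₗ[MvPolynomial σ R] MvPolynomial σ R)
    (hL : ∀ β, L (Pi.single β 1) ∈ homogeneousSubmodule σ R (e β)) (he : ∀ β, e β ≤ D)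
    {y : MvPolynomial σ R} (hy : y ∈ homogeneousSubmodule σ R D)
    (hyL : y ∈ LinearMap.range L) :
    ∃ g, IsHomogeneousFamily e D g ∧ L g = y := by
  obtain ⟨h, rfl⟩ := hyL
  refine ⟨familyComponent e D h, isHomogeneousFamily_familyComponent e D h, ?_⟩
  rw [← homogeneousComponent_map L hL he, homogeneousComponent_of_mem hy, if_pos rfl]

lemma IsHomogeneousFamily.exists_map_eq [Fintype κ'] [DecidableEq κ'] {e : κ → ℕ}
    {e' : κ' → ℕ} {D : ℕ}
    (L : (κ' → MvPolynomial σ R) →ₗ[MvPolynomial σ R] (κ → MvPolynomial σ R))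
    (hL : ∀ β α, L (Pi.single β 1) α = 0 ∨
      (e α ≤ e' β ∧ L (Pi.single β 1) α ∈ homogeneousSubmodule σ R (e' β - e α)))
    (he' : ∀ β, e' β ≤ D) {y : κ → MvPolynomial σ R} (hy : IsHomogeneousFamily e D y)
    (hyL : y ∈ LinearMap.range L) : ∃ g, IsHomogeneousFamily e' D g ∧ L g = y := by
  obtain ⟨h, rfl⟩ := hyL
  refine ⟨familyComponent e' D h, isHomogeneousFamily_familyComponent e' D h, ?_⟩
  rw [← familyComponent_map L hL he', familyComponent_of_isHomogeneousFamily hy]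

lemma IsHomogeneousFamily.koszulDiff [LinearOrder σ] {e : κ → ℕ} {D : ℕ}
    (he : ∀ α, e α ≤ D) {t : Finset σ → κ → MvPolynomial σ R} {T : Finset σ}
    (ht : ∀ i ∈ T, IsHomogeneousFamily e D (t (T.erase i))) :
    IsHomogeneousFamily e (D + 1) (koszulDiff _ (X : σ → MvPolynomial σ R) t T) := by
  intro α
  rw [koszulDiff_apply, Finset.sum_apply]
  refine Submodule.sum_mem _ fun i hi => ?_
  rw [Pi.smul_apply, Pi.smul_apply, smul_eq_mul, show D + 1 - e α = 1 + (D - e α) by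
    have := he α; omega]
  exact zsmul_mem ((isHomogeneous_X R i).mul (ht i hi α)) _

end GradedFamilies

structure GradedFreeResolution (k : Type*) [Field k] (n : ℕ) where
  ρ : ℕ → ℕ
  e : ∀ i, Fin (ρ i) → ℕ
  δ : ∀ i, (Fin (ρ (i+1)) → MvP k n) →ₗ[MvP k n] (Fin (ρ i) → MvP k n)
  ε : (Fin (ρ 0) → MvP k n) →ₗ[MvP k n] MvP k n
  ker_ε : LinearMap.ker ε = LinearMap.range (δ 0)
  ker_δ : ∀ i, LinearMap.ker (δ i) = LinearMap.range (δ (i+1))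
  ε_single_mem : ∀ β, ε (Pi.single β 1) ∈ homogeneousSubmodule (Fin (n+1)) k (e 0 β)
  δ_single_apply : ∀ i (β : Fin (ρ (i+1))) (α : Fin (ρ i)), δ i (Pi.single β 1) α = 0 ∨
    (e i α ≤ e (i+1) β ∧
      δ i (Pi.single β 1) α ∈ homogeneousSubmodule (Fin (n+1)) k (e (i+1) β - e i α))

lemma IdealIsRegular.exists_gradedFreeResolution {k : Type*} [Field k] {n : ℕ}
    {I : Ideal (MvP k n)} {r : ℤ} (h : IdealIsRegular I r) :
    ∃ F : GradedFreeResolution k n,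
      LinearMap.range F.ε = I ∧ ∀ i β, (F.e i β : ℤ) ≤ r + i := by
  obtain ⟨ρ, e, δ, ε, hrange, hker0, hker, hE, hD, hbound⟩ := h
  exact ⟨⟨ρ, e, δ, ε, hker0, hker, hE, hD⟩, hrange, hbound⟩

namespace GradedFreeResolution

variable {k : Type*} [Field k] {n : ℕ} (F : GradedFreeResolution k n) {d : ℕ}

local notation "kdX" => koszulDiff _ (X : Fin (n+1) → MvP k n)

lemma koszulDiff_mem_range_δ_zero {s : Finset (Fin (n+1)) → Fin (F.ρ 0) → MvP k n}
    {s₀ : Finset (Fin (n+1)) → MvP k n} (hlink : ∀ T, #T = 1 → F.ε (s T) = kdX s₀ T)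
    {T : Finset (Fin (n+1))} (hT : #T = 2) : kdX s T ∈ LinearMap.range (F.δ 0) := by
  rw [← F.ker_ε, LinearMap.mem_ker, map_koszulDiff,
    koszulDiff_congr fun i hi => hlink _ (by rw [card_erase_of_mem hi, hT]),
    koszulDiff_koszulDiff]

lemma koszulDiff_mem_range_δ_succ {q : ℕ} {s : Finset (Fin (n+1)) → Fin (F.ρ q) → MvP k n}
    {s' : Finset (Fin (n+1)) → Fin (F.ρ (q+1)) → MvP k n}
    (hlink : ∀ T, #T = q + 2 → F.δ q (s' T) = kdX s T)
    {T : Finset (Fin (n+1))} (hT : #T = q + 3) : kdX s' T ∈ LinearMap.range (F.δ (q+1)) := by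
  rw [← F.ker_δ, LinearMap.mem_ker, map_koszulDiff,
    koszulDiff_congr fun i hi => hlink _ (by rw [card_erase_of_mem hi, hT]; rfl),
    koszulDiff_koszulDiff]

lemma exists_lift_X_mul (hdeg : ∀ i β, F.e i β ≤ d + i) {f : MvP k n}
    (hf : f ∈ homogeneousSubmodule (Fin (n+1)) k d)
    (hXf : ∀ j, X j * f ∈ LinearMap.range F.ε) :
    ∃ s : Finset (Fin (n+1)) → Fin (F.ρ 0) → MvP k n,
      (∀ T, #T = 1 → IsHomogeneousFamily (F.e 0) (d + 1) (s T)) ∧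
      ∀ T, #T = 1 → F.ε (s T) = kdX (Pi.single ∅ f) T := by
  have hlift : ∀ T : Finset (Fin (n+1)), #T = 1 →
      ∃ g, IsHomogeneousFamily (F.e 0) (d + 1) g ∧ F.ε g = kdX (Pi.single ∅ f) T := by
    intro T hT
    obtain ⟨j, rfl⟩ := card_eq_one.1 hT
    rw [koszulDiff_singleton, Pi.single_eq_same, smul_eq_mul]
    refine exists_isHomogeneousFamily_map_eq F.ε F.ε_single_mem
      (fun β => by have := hdeg 0 β; omega) ?_ (hXf j)
    exact X_mul_mem_homogeneousSubmodule j hf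
  choose! s hs using hlift
  exact ⟨s, fun T hT => (hs T hT).1, fun T hT => (hs T hT).2⟩

lemma exists_lift (hdeg : ∀ i β, F.e i β ≤ d + i) {q : ℕ}
    {s : Finset (Fin (n+1)) → Fin (F.ρ q) → MvP k n}
    (hs : ∀ T, #T = q + 1 → IsHomogeneousFamily (F.e q) (d + q + 1) (s T))
    (hks : ∀ T, #T = q + 2 → kdX s T ∈ LinearMap.range (F.δ q)) :
    ∃ s' : Finset (Fin (n+1)) → Fin (F.ρ (q+1)) → MvP k n,
      (∀ T, #T = q + 2 → IsHomogeneousFamily (F.e (q+1)) (d + (q+1) + 1) (s' T)) ∧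
      ∀ T, #T = q + 2 → F.δ q (s' T) = kdX s T := by
  have hlift : ∀ T : Finset (Fin (n+1)), #T = q + 2 →
      ∃ g, IsHomogeneousFamily (F.e (q+1)) (d + (q+1) + 1) g ∧ F.δ q g = kdX s T := by
    intro T hT
    refine IsHomogeneousFamily.exists_map_eq (F.δ q) (F.δ_single_apply q)
      (fun β => by have := hdeg (q+1) β; omega) ?_ (hks T hT)
    exact IsHomogeneousFamily.koszulDiff (fun α => by have := hdeg q α; omega)
      fun i hi => hs _ (by rw [card_erase_of_mem hi, hT]; rfl)
  choose! s' hs' using hlift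
  exact ⟨s', fun T hT => (hs' T hT).1, fun T hT => (hs' T hT).2⟩

theorem exists_koszulDiff_sub_mem_range (hdeg : ∀ i β, F.e i β ≤ d + i) {q : ℕ}
    (hq : q ≤ n) {s : Finset (Fin (n+1)) → Fin (F.ρ q) → MvP k n}
    (hs : ∀ T, #T = q + 1 → IsHomogeneousFamily (F.e q) (d + q + 1) (s T))
    (hks : ∀ T, #T = q + 2 → kdX s T ∈ LinearMap.range (F.δ q)) :
    ∃ u, ∀ T, #T = q + 1 → s T - kdX u T ∈ LinearMap.range (F.δ q) := by
  induction hm : n - q generalizing q with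
  | zero =>
    obtain rfl : q = n := by omega
    obtain ⟨u, hu⟩ := exists_koszulDiff_eq_of_mem_span (V := univ) (g := s univ) fun α => by
      rw [coe_univ]
      exact mem_span_X_of_mem_homogeneousSubmodule (by have := hdeg q α; omega)
        (hs univ (by simp) α)
    refine ⟨u, fun T hT => ?_⟩
    rw [eq_univ_of_card T (by simp [hT]), hu, sub_self]
    exact zero_mem _
  | succ m ih =>
    obtain ⟨s', hs', hlink⟩ := F.exists_lift hdeg hs hks
    obtain ⟨u', hu'⟩ := ih (by omega) hs' (fun T hT => F.koszulDiff_mem_range_δ_succ hlink hT)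
      (by omega)
    have hcocycle : ∀ T, #T = q + 2 → kdX (s - fun U => F.δ q (u' U)) T = 0 := by
      intro T hT
      have hker : s' T - kdX u' T ∈ LinearMap.ker (F.δ q) := by
        rw [F.ker_δ]
        exact hu' T hT
      rw [LinearMap.mem_ker, map_sub, hlink T hT, map_koszulDiff, sub_eq_zero] at hker
      rw [map_sub, Pi.sub_apply, hker, sub_self]
    obtain ⟨u, hu⟩ := koszulExactOn univ (q + 1) (by simp; omega) _ fun T _ hT => hcocycle T hT
    refine ⟨u, fun T hT => ⟨u' T, ?_⟩⟩
    rw [← hu T (subset_univ T) hT, Pi.sub_apply, sub_sub_cancel]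

theorem mem_range_ε_of_X_mul_mem (hdeg : ∀ i β, F.e i β ≤ d + i) {f : MvP k n}
    (hf : f ∈ homogeneousSubmodule (Fin (n+1)) k d)
    (hXf : ∀ j, X j * f ∈ LinearMap.range F.ε) : f ∈ LinearMap.range F.ε := by
  obtain ⟨s, hs, hlink⟩ := F.exists_lift_X_mul hdeg hf hXf
  obtain ⟨u, hu⟩ := F.exists_koszulDiff_sub_mem_range hdeg (Nat.zero_le n) hs
    fun T hT => F.koszulDiff_mem_range_δ_zero hlink hT
  have h0 := hu {0} (card_singleton 0)
  rw [← F.ker_ε, LinearMap.mem_ker, map_sub, hlink _ (card_singleton 0), koszulDiff_singleton,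
    koszulDiff_singleton, Pi.single_eq_same, map_smul, ← smul_sub, smul_eq_mul, mul_eq_zero,
    sub_eq_zero] at h0
  exact ⟨u ∅, (h0.resolve_left (X_ne_zero 0)).symm⟩

end GradedFreeResolution

section Saturation

variable {k : Type*} [Field k] {n : ℕ}

lemma le_satIdeal (I : Ideal (MvP k n)) : I ≤ satIdeal I := fun x hx =>
  Submodule.mem_iSup_of_mem 0 (by
    rwa [pow_zero, Ideal.one_eq_top, Submodule.top_coe, Submodule.colon_univ])

lemma mem_satIdeal_iff {I : Ideal (MvP k n)} {f : MvP k n} :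
    f ∈ satIdeal I ↔
      ∃ t : ℕ, f ∈ I.colon ((irrIdeal k n ^ t : Ideal (MvP k n)) : Set (MvP k n)) :=
  Submodule.mem_iSup_of_directed _ (Monotone.directed_le fun _ _ hab =>
    Submodule.colon_mono le_rfl (Ideal.pow_le_pow_right hab))

lemma mem_of_mem_colon_irrIdeal_pow {I : Ideal (MvP k n)} {r : ℤ}
    (hI : ∀ d : ℕ, r ≤ d → ∀ f ∈ homogeneousSubmodule (Fin (n+1)) k d,
      (∀ j, X j * f ∈ I) → f ∈ I) (t : ℕ) :
    ∀ d : ℕ, r ≤ d → ∀ f ∈ homogeneousSubmodule (Fin (n+1)) k d,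
      f ∈ I.colon ((irrIdeal k n ^ t : Ideal (MvP k n)) : Set (MvP k n)) → f ∈ I := by
  induction t with
  | zero =>
    intro d _ f _ hf
    rwa [pow_zero, Ideal.one_eq_top, Submodule.top_coe, Submodule.colon_univ] at hf
  | succ t ih =>
    intro d hd f hf hft
    refine hI d hd f hf fun j => ih (d + 1) (by push_cast; omega) _ ?_ ?_
    · exact X_mul_mem_homogeneousSubmodule j hf
    · refine Submodule.mem_colon.2 fun p hp => ?_
      have hXp : X j * p ∈ irrIdeal k n ^ (t + 1) := by
        rw [pow_succ, mul_comm]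
        exact Ideal.mul_mem_mul (Ideal.subset_span ⟨j, rfl⟩) hp
      simpa [smul_eq_mul, mul_assoc, mul_left_comm] using Submodule.mem_colon.1 hft _ hXp

lemma satInDegrees_of_forall_X_mul_mem {I : Ideal (MvP k n)} {r : ℤ}
    (hI : ∀ d : ℕ, r ≤ d → ∀ f ∈ homogeneousSubmodule (Fin (n+1)) k d,
      (∀ j, X j * f ∈ I) → f ∈ I) : SatInDegrees I r := fun d hd f hf =>
  ⟨fun h => le_satIdeal I h, fun h =>
    let ⟨t, ht⟩ := mem_satIdeal_iff.1 h
    mem_of_mem_colon_irrIdeal_pow hI t d hd f hf ht⟩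

end Saturation

theorem regular_implies_saturated_in_degrees_general {k : Type*} [Field k] {n : ℕ}
    (I : Ideal (MvP k n))
    (r : ℤ) (hreg : IdealIsRegular I r) :
    SatInDegrees I r := by
  obtain ⟨F, rfl, hbound⟩ := hreg.exists_gradedFreeResolution
  refine satInDegrees_of_forall_X_mul_mem fun d hd f hf hXf =>
    F.mem_range_ε_of_X_mul_mem (fun i β => ?_) hf hXf
  have := hbound i β
  omega

/-- An `r`-regular homogeneous ideal agrees with its saturation in all degrees `≥ r`. -/
theorem regular_implies_saturated_in_degrees {k : Type*} [Field k] {n : ℕ}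
    (I : Ideal (MvP k n))
    (hI : Ideal.IsHomogeneous (homogeneousSubmodule (Fin (n+1)) k) I)
    (r : ℤ) (hreg : IdealIsRegular I r) :
    SatInDegrees I r :=
  regular_implies_saturated_in_degrees_general I r hreg
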